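/- Let G be a locally compact group, η ∈ L²(G) a continuous square-integrable function, and (U_n) a decreasing neighborhood base at the identity of finite positive Haar measure. If η is orthogonal to ρ(s)χ_{U_n} for all s ∈ G and all n, then η = 0, where ρ is the right regular representation. -/

import Mathlib

/-! Orthogonality of `η` to `ρ(x⁻¹)χ_{U n}` says exactly that `η` integrates to zero over the
translate `U n * x`. These translates form a neighbourhood base at `x` of positive finite measure,
so continuity of `η` at `x` forces `η x = 0`: on a small such set `η` stays within `‖η x‖ / 2`
of `η x`, and its integral there cannot vanish unless `η x = 0`. -/

open MeasureTheory
open scoped InnerProductSpace ENNReal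

variable {G : Type*} [Group G] [TopologicalSpace G] [IsTopologicalGroup G] [T2Space G]
  [LocallyCompactSpace G] [MeasurableSpace G] [BorelSpace G]

/-- The von Neumann algebra (as a set of operators) generated by a set `S` of operators:
its double commutant. -/
def VNset {E : Type*} [NormedAddCommGroup E] [InnerProductSpace ℂ E]
    (S : Set (E →L[ℂ] E)) : Set (E →L[ℂ] E) :=
  Set.centralizer (Set.centralizer S)

/-- `ξ` is a cyclic vector for the representation `π`: the span of its orbit is dense. -/
def IsCyclicVector {E : Type*} [NormedAddCommGroup E] [InnerProductSpace ℂ E]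
    (π : G → (E →L[ℂ] E)) (ξ : E) : Prop :=
  (Submodule.span ℂ (Set.range fun s => π s ξ)).topologicalClosure = ⊤

/-- `ω` is a normal state on the set of operators `M`: on `M` it is given by a countable
convex combination of vector states (the standard form of normal states). -/
def IsNormalStateS {E : Type*} [NormedAddCommGroup E] [InnerProductSpace ℂ E]
    (M : Set (E →L[ℂ] E)) (ω : (E →L[ℂ] E) → ℂ) : Prop :=
  ∃ ξ : ℕ → E, (∑' n, ‖ξ n‖ ^ 2) = 1 ∧ ∀ T ∈ M, ω T = ∑' n, ⟪T (ξ n), ξ n⟫_ℂ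

/-- `ω` is faithful on `M`: it is nonzero on every nonzero positive element of `M`. -/
def IsFaithfulS {E : Type*} [NormedAddCommGroup E] [InnerProductSpace ℂ E]
    [CompleteSpace E] (M : Set (E →L[ℂ] E)) (ω : (E →L[ℂ] E) → ℂ) : Prop :=
  ∀ T : E →L[ℂ] E, T ∈ M → T.IsPositive → ω T = 0 → T = 0

/-- A von Neumann algebra (given as a set of operators) is σ-finite if it admits a
faithful normal state. -/
def IsSigmaFiniteVN {E : Type*} [NormedAddCommGroup E] [InnerProductSpace ℂ E]
    [CompleteSpace E] (M : Set (E →L[ℂ] E)) : Prop :=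
  ∃ ω : (E →L[ℂ] E) → ℂ, IsNormalStateS M ω ∧ IsFaithfulS M ω


theorem eq_zero_of_forall_setIntegral_eq_zero_of_continuousAt {X E : Type*}
    [TopologicalSpace X] [MeasurableSpace X] [NormedAddCommGroup E] [NormedSpace ℝ E]
    [CompleteSpace E] {μ : Measure X} {f : X → E} {x : X}
    (hfx : ContinuousAt f x) (hf : AEStronglyMeasurable f μ)
    (h : ∀ V ∈ nhds x, ∃ A ⊆ V, MeasurableSet A ∧ 0 < μ A ∧ μ A < ∞ ∧ ∫ t in A, f t ∂μ = 0) :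
    f x = 0 := by
  by_contra hne
  have hfx_pos : 0 < ‖f x‖ := norm_pos_iff.2 hne
  obtain ⟨A, hAV, hAmeas, hApos, hAfin, hzero⟩ :=
    h _ (hfx (Metric.closedBall_mem_nhds (f x) (half_pos hfx_pos)))
  have hclose : ∀ t ∈ A, ‖f t - f x‖ ≤ ‖f x‖ / 2 := fun t ht => by
    simpa [dist_eq_norm] using hAV ht
  have hint : IntegrableOn f A μ := by
    refine Measure.integrableOn_of_bounded hAfin.ne hf (M := ‖f x‖ + ‖f x‖ / 2) ?_
    refine ae_restrict_of_forall_mem hAmeas fun t ht => ?_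
    calc ‖f t‖ ≤ ‖f x‖ + ‖f t - f x‖ := norm_le_insert' _ _
      _ ≤ ‖f x‖ + ‖f x‖ / 2 := by gcongr; exact hclose t ht
  have hmass : 0 < μ.real A := ENNReal.toReal_pos hApos.ne' hAfin.ne
  have hbound : ‖∫ t in A, (f t - f x) ∂μ‖ ≤ ‖f x‖ / 2 * μ.real A :=
    norm_setIntegral_le_of_norm_le_const hAfin hclose
  rw [integral_sub hint (integrableOn_const hAfin.ne), hzero, setIntegral_const, zero_sub,
    norm_neg, norm_smul, Real.norm_of_nonneg hmass.le] at hbound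
  nlinarith [mul_pos hmass hfx_pos]

theorem inner_eq_mul_conj_setIntegral_preimage {X : Type*} [MeasurableSpace X] {μ : Measure X}
    {φ : X → X} (hφ : Measure.QuasiMeasurePreserving φ μ μ) {U : Set X} (hU : MeasurableSet U)
    {η : X → ℂ} {ηL : Lp ℂ 2 μ} (hηL : (ηL : X → ℂ) =ᵐ[μ] η)
    {χ g : Lp ℂ 2 μ} (hχ : (χ : X → ℂ) =ᵐ[μ] U.indicator fun _ => 1) {c : ℂ}
    (hg : (g : X → ℂ) =ᵐ[μ] fun t => c * χ (φ t)) :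
    ⟪ηL, g⟫_ℂ = c * starRingEnd ℂ (∫ t in φ ⁻¹' U, η t ∂μ) := by
  have hχφ : (fun t => χ (φ t)) =ᵐ[μ] fun t => U.indicator (fun _ => 1) (φ t) := hφ.ae_eq_comp hχ
  have hpoint : (fun t => ⟪(ηL : X → ℂ) t, (g : X → ℂ) t⟫_ℂ) =ᵐ[μ]
      fun t => c * (φ ⁻¹' U).indicator (fun u => starRingEnd ℂ (η u)) t := by
    filter_upwards [hηL, hg, hχφ] with t hηt hgt hχt
    by_cases ht : φ t ∈ U
    · simp [hηt, hgt, hχt, ht]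
    · simp [hgt, hχt, ht]
  rw [L2.inner_def, integral_congr_ae hpoint, integral_const_mul,
    integral_indicator (hφ.measurable hU), integral_conj]

theorem measure_preimage_of_map_eq_smul {X : Type*} [MeasurableSpace X] {μ : Measure X}
    {φ : X → X} (hφ : Measurable φ) {c : ℝ≥0∞} (hmap : μ.map φ = c • μ) {U : Set X}
    (hU : MeasurableSet U) : μ (φ ⁻¹' U) = c * μ U := by
  rw [← Measure.map_apply hφ hU, hmap, Measure.smul_apply, smul_eq_mul]

theorem continuous_orthogonal_to_translates_of_indicators_eq_zero_general
    (μ : Measure G)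
    (Δ : G → ℝ) (hΔ : ∀ s : G, 0 < Δ s ∧ μ.map (· * s) = (ENNReal.ofReal (Δ s))⁻¹ • μ)
    (rho : G → (Lp ℂ 2 μ →L[ℂ] Lp ℂ 2 μ))
    (hrho : ∀ (s : G) (f : Lp ℂ 2 μ),
      (rho s f : G → ℂ) =ᵐ[μ] fun t => (Real.sqrt (Δ s) : ℂ) * f (t * s))
    (η : G → ℂ) (hη : Continuous η) (ηL : Lp ℂ 2 μ) (hηL : (ηL : G → ℂ) =ᵐ[μ] η)
    (U : ℕ → Set G)
    (hU : (nhds (1 : G)).HasBasis (fun _ : ℕ => True) U)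
    (hUmeas : ∀ n, MeasurableSet (U n)) (hUpos : ∀ n, 0 < μ (U n)) (hUfin : ∀ n, μ (U n) < ⊤)
    (χ : ℕ → Lp ℂ 2 μ)
    (hχ : ∀ n, (χ n : G → ℂ) =ᵐ[μ] (U n).indicator (fun _ => (1:ℂ)))
    (horth : ∀ (s : G) (n : ℕ), ⟪ηL, rho s (χ n)⟫_ℂ = 0) :
    η = 0 := by
  funext x
  obtain ⟨hΔpos, hmap⟩ := hΔ x⁻¹
  set φ : G → G := (· * x⁻¹)
  have hφ : Measurable φ := measurable_mul_const _
  have hφqmp : Measure.QuasiMeasurePreserving φ μ μ :=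
    ⟨hφ, by rw [hmap]; exact Measure.smul_absolutelyContinuous⟩
  have hsqrt : (Real.sqrt (Δ x⁻¹) : ℂ) ≠ 0 := by exact_mod_cast (Real.sqrt_pos.2 hΔpos).ne'
  have hbasis : (nhds x).HasBasis (fun _ => True) fun n => φ ⁻¹' U n :=
    nhds_translation_mul_inv x ▸ hU.comap φ
  refine eq_zero_of_forall_setIntegral_eq_zero_of_continuousAt hη.continuousAt
    (hη.aestronglyMeasurable (μ := μ)) fun V hV => ?_
  obtain ⟨n, -, hnV⟩ := hbasis.mem_iff.1 hV
  refine ⟨_, hnV, hφ (hUmeas n), ?_, ?_, ?_⟩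
  · rw [measure_preimage_of_map_eq_smul hφ hmap (hUmeas n)]
    exact ENNReal.mul_pos (ENNReal.inv_ne_zero.2 ENNReal.ofReal_ne_top) (hUpos n).ne'
  · rw [measure_preimage_of_map_eq_smul hφ hmap (hUmeas n)]
    exact ENNReal.mul_lt_top (ENNReal.inv_lt_top.2 (ENNReal.ofReal_pos.2 hΔpos)) (hUfin n)
  · have h := horth x⁻¹ n
    rw [inner_eq_mul_conj_setIntegral_preimage hφqmp (hUmeas n) hηL (hχ n) (hrho x⁻¹ (χ n))] at h
    simpa [hsqrt] using h

/-- If a continuous square-integrable function `η` is orthogonal to `ρ(s)χ_{U n}` for all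
`s ∈ G` and all `n`, where `(U n)` is a decreasing neighborhood base at the identity of
finite positive Haar measure, then `η = 0`. -/
theorem continuous_orthogonal_to_translates_of_indicators_eq_zero
    (μ : Measure G) [μ.IsHaarMeasure]
    (Δ : G → ℝ) (hΔ : ∀ s : G, 0 < Δ s ∧ μ.map (· * s) = (ENNReal.ofReal (Δ s))⁻¹ • μ)
    (rho : G → (Lp ℂ 2 μ →L[ℂ] Lp ℂ 2 μ))
    (hrho : ∀ (s : G) (f : Lp ℂ 2 μ),
      (rho s f : G → ℂ) =ᵐ[μ] fun t => (Real.sqrt (Δ s) : ℂ) * f (t * s))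
    (η : G → ℂ) (hη : Continuous η) (ηL : Lp ℂ 2 μ) (hηL : (ηL : G → ℂ) =ᵐ[μ] η)
    (U : ℕ → Set G) (hUdec : Antitone U)
    (hU : (nhds (1 : G)).HasBasis (fun _ : ℕ => True) U)
    (hUmeas : ∀ n, MeasurableSet (U n)) (hUpos : ∀ n, 0 < μ (U n)) (hUfin : ∀ n, μ (U n) < ⊤)
    (χ : ℕ → Lp ℂ 2 μ)
    (hχ : ∀ n, (χ n : G → ℂ) =ᵐ[μ] (U n).indicator (fun _ => (1:ℂ)))
    (horth : ∀ (s : G) (n : ℕ), ⟪ηL, rho s (χ n)⟫_ℂ = 0) :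
    η = 0 :=
  continuous_orthogonal_to_translates_of_indicators_eq_zero_general μ Δ hΔ rho hrho η hη ηL hηL U hU
    hUmeas hUpos hUfin χ hχ horth
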